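/- Let (Ω,F,P) be a probability space and suppose random variables Q_n(m) for m ∈ {1,…,M} satisfy: for every m1 in a subset M^c and a fixed m* ∉ M^c, (1/n)(Q_n(m1) − Q_n(m*)) converges in probability to a constant c_{m1} > 0. Define m̂_n to be any minimizer of Q_n(m) over m ∈ {1,…,M}. Then P(m̂_n ∈ M^c) → 0 as n → ∞. -/

import Mathlib

open MeasureTheory Filter Topology

/-! A minimizer `m̂_n` lying in `Mc` forces `(1/n)(Q_n(m̂_n) - Q_n(m*)) ≤ 0`, while this normalized
difference converges in probability to a positive constant; so each `m1 ∈ Mc` is selected only on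
an event of vanishing probability, and `Mc` is finite. -/

section

variable {α ι Ω : Type*} {m : MeasurableSpace Ω} {μ : Measure Ω} {l : Filter α}

theorem MeasureTheory.TendstoInMeasure.tendsto_measure_nonpos {f : α → Ω → ℝ} {c : ℝ}
    (hf : TendstoInMeasure μ f l fun _ => c) (hc : 0 < c) :
    Tendsto (fun i => μ {x | f i x ≤ 0}) l (𝓝 0) := by
  refine tendsto_of_tendsto_of_tendsto_of_le_of_le tendsto_const_nhds
    (tendstoInMeasure_iff_dist.mp hf c hc) (fun _ => zero_le) fun i => measure_mono ?_
  intro x hx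
  simp only [Set.mem_ofPred_eq, Real.dist_eq] at hx ⊢
  rw [abs_of_nonpos (by linarith)]
  linarith

theorem tendsto_measure_iUnion_of_finite [Finite ι] {s : ι → α → Set Ω}
    (hs : ∀ i, Tendsto (fun a => μ (s i a)) l (𝓝 0)) :
    Tendsto (fun a => μ (⋃ i, s i a)) l (𝓝 0) := by
  have := Fintype.ofFinite ι
  refine tendsto_of_tendsto_of_tendsto_of_le_of_le tendsto_const_nhds
    (by simpa using tendsto_finsetSum Finset.univ fun i _ => hs i) (fun _ => zero_le)
    fun a => measure_iUnion_fintype_le μ (s · a)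

end

theorem stmt10_general (M : ℕ) (Ω : Type) (m0 : MeasurableSpace Ω) (μ : Measure Ω)
    (Q : ℕ → Fin M → Ω → ℝ) (Mc : Set (Fin M)) (mstar : Fin M)
    (c : Fin M → ℝ) (hc : ∀ m1 ∈ Mc, 0 < c m1)
    (hconv : ∀ m1 ∈ Mc,
      TendstoInMeasure μ
        (fun (n : ℕ) ω => (1 / (n : ℝ)) * (Q n m1 ω - Q n mstar ω)) atTop
        (fun _ => c m1))
    (mhat : ℕ → Ω → Fin M)
    (hmin : ∀ n ω, ∀ m : Fin M, Q n (mhat n ω) ω ≤ Q n m ω) :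
    Tendsto (fun n => μ {ω | mhat n ω ∈ Mc}) atTop (nhds 0) := by
  have hselected : ∀ n, {ω | mhat n ω ∈ Mc} ⊆
      ⋃ m1 : Mc, {ω | (1 / (n : ℝ)) * (Q n m1 ω - Q n mstar ω) ≤ 0} := fun n ω hω =>
    Set.mem_iUnion.2 ⟨⟨mhat n ω, hω⟩,
      mul_nonpos_of_nonneg_of_nonpos (by positivity) (sub_nonpos.2 (hmin n ω mstar))⟩
  have hunion := tendsto_measure_iUnion_of_finite fun m1 : Mc =>
    (hconv m1 m1.2).tendsto_measure_nonpos (hc m1 m1.2)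
  exact tendsto_of_tendsto_of_tendsto_of_le_of_le tendsto_const_nhds hunion
    (fun _ => zero_le) fun n => measure_mono (hselected n)

/-- if for every misspecified model `m1 ∈ Mc` the normalized criterion
difference `(1/n)(Q_n(m1) - Q_n(m*))` converges in probability to a positive constant,
then the probability that the criterion minimizer `m̂_n` lies in `Mc` tends to `0`. -/
theorem stmt10 (M : ℕ) (Ω : Type) (m0 : MeasurableSpace Ω) (μ : Measure Ω)
    [IsProbabilityMeasure μ]
    (Q : ℕ → Fin M → Ω → ℝ) (Mc : Set (Fin M)) (mstar : Fin M) (hmstar : mstar ∉ Mc)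
    (c : Fin M → ℝ) (hc : ∀ m1 ∈ Mc, 0 < c m1)
    (hconv : ∀ m1 ∈ Mc,
      TendstoInMeasure μ
        (fun (n : ℕ) ω => (1 / (n : ℝ)) * (Q n m1 ω - Q n mstar ω)) atTop
        (fun _ => c m1))
    (mhat : ℕ → Ω → Fin M)
    (hmin : ∀ n ω, ∀ m : Fin M, Q n (mhat n ω) ω ≤ Q n m ω) :
    Tendsto (fun n => μ {ω | mhat n ω ∈ Mc}) atTop (nhds 0) :=
  stmt10_general M Ω m0 μ Q Mc mstar c hc hconv mhat hmin
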